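/- Let ∼_n be equivalence relations on [n]² satisfying (E2) with constant B, let π be a partition of [k] with #π = r, and let n ≥ B. Then #T_{n,k}(π) ≤ n^{r+1}·B^{k−r−1}. If moreover π contains a singleton block, then #T_{n,k}(π) ≤ n^r·B^{k−r}. -/

import Mathlib

open MeasureTheory Filter Finset

noncomputable def esd {n : ℕ} (A : Matrix (Fin n) (Fin n) ℝ) : Measure ℝ :=
  if hA : A.IsHermitian then ((n : ENNReal))⁻¹ • ∑ i : Fin n, Measure.dirac (hA.eigenvalues i)
  else 0

/-- Weak convergence in probability of a sequence of random measures to a fixed measure. -/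
def WeakInProb {Ω : Type*} [MeasurableSpace Ω] (P : Measure Ω)
    (μ : ℕ → Ω → Measure ℝ) (ν : Measure ℝ) : Prop :=
  ∀ f : BoundedContinuousFunction ℝ ℝ, ∀ ε : ℝ, 0 < ε →
    Tendsto (fun n => P {ω | ε ≤ |(∫ x, f x ∂(μ n ω)) - ∫ x, f x ∂ν|}) atTop (nhds 0)

/-- Weak convergence almost surely of a sequence of random measures to a fixed measure. -/
def WeakAS {Ω : Type*} [MeasurableSpace Ω] (P : Measure Ω)
    (μ : ℕ → Ω → Measure ℝ) (ν : Measure ℝ) : Prop :=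
  ∀ᵐ ω ∂P, ∀ f : BoundedContinuousFunction ℝ ℝ,
    Tendsto (fun n => ∫ x, f x ∂(μ n ω)) atTop (nhds (∫ x, f x ∂ν))

/-- Cyclic successor in `Fin k`. -/
def cyc {k : ℕ} (j : Fin k) : Fin k := j + ⟨1 % k, Nat.mod_lt 1 j.pos⟩

/-- `R` is a family of equivalence relations on `[n]²` with `(p,q) ∼ (q,p)`. -/
def EquivFamily (R : (n : ℕ) → (Fin n × Fin n) → (Fin n × Fin n) → Prop) : Prop :=
  ∀ n : ℕ, Equivalence (R n) ∧ ∀ p q : Fin n, R n (p, q) (q, p)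

/-- The count appearing in condition (E1). -/
noncomputable def E1count (R : (n : ℕ) → (Fin n × Fin n) → (Fin n × Fin n) → Prop)
    (n : ℕ) : ℕ :=
  Finset.univ.sup fun p : Fin n =>
    Nat.card {x : Fin n × Fin n × Fin n // R n (p, x.1) (x.2.1, x.2.2)}

/-- Condition (E1): the (E1)-count is `o(n²)`. -/
def CondE1 (R : (n : ℕ) → (Fin n × Fin n) → (Fin n × Fin n) → Prop) : Prop :=
  Tendsto (fun n => (E1count R n : ℝ) / (n : ℝ) ^ 2) atTop (nhds 0)

/-- Condition (E1'): the (E1)-count is `O(n^{2-δ})` for some fixed `δ > 0`. -/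
def CondE1' (R : (n : ℕ) → (Fin n × Fin n) → (Fin n × Fin n) → Prop) : Prop :=
  ∃ δ : ℝ, 0 < δ ∧ ∃ c : ℝ, ∀ n : ℕ, (E1count R n : ℝ) ≤ c * (n : ℝ) ^ ((2 : ℝ) - δ)

/-- Condition (E2) with constant `B`. -/
def CondE2 (R : (n : ℕ) → (Fin n × Fin n) → (Fin n × Fin n) → Prop) (B : ℕ) : Prop :=
  ∀ (n : ℕ) (p q r : Fin n), Nat.card {s : Fin n // R n (p, q) (r, s)} ≤ B

/-- The count appearing in condition (E3). -/
noncomputable def E3count (R : (n : ℕ) → (Fin n × Fin n) → (Fin n × Fin n) → Prop)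
    (n : ℕ) : ℕ :=
  Nat.card {x : Fin n × Fin n × Fin n // R n (x.1, x.2.1) (x.2.1, x.2.2) ∧ x.2.2 ≠ x.1}

/-- Condition (E3): the (E3)-count is `o(n²)`. -/
def CondE3 (R : (n : ℕ) → (Fin n × Fin n) → (Fin n × Fin n) → Prop) : Prop :=
  Tendsto (fun n => (E3count R n : ℝ) / (n : ℝ) ^ 2) atTop (nhds 0)

/-- Condition (E3'): the (E3)-count is `O(n^{2-δ})` for some fixed `δ > 0`. -/
def CondE3' (R : (n : ℕ) → (Fin n × Fin n) → (Fin n × Fin n) → Prop) : Prop :=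
  ∃ δ : ℝ, 0 < δ ∧ ∃ c : ℝ, ∀ n : ℕ, (E3count R n : ℝ) ≤ c * (n : ℝ) ^ ((2 : ℝ) - δ)

/-- The `j`-th (directed) edge of the tuple `t` (indices cyclic mod `k`). -/
def tedge {n k : ℕ} (t : Fin k → Fin n) (j : Fin k) : Fin n × Fin n := (t j, t (cyc j))

/-- The weight `w(t̲) = ∏ⱼ w(|tⱼ − tⱼ₊₁|/n)` of a tuple. -/
noncomputable def wprod {n k : ℕ} (w : ℝ → ℝ) (t : Fin k → Fin n) : ℝ :=
  ∏ j : Fin k, w (|((t j : ℕ) : ℝ) - ((t (cyc j) : ℕ) : ℝ)| / (n : ℝ))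

/-- The product `a_n(t̲) = ∏ⱼ a_n(tⱼ, tⱼ₊₁)` along a tuple. -/
noncomputable def aprod {Ω : Type*} {n k : ℕ} (A : Ω → Matrix (Fin n) (Fin n) ℝ)
    (t : Fin k → Fin n) (ω : Ω) : ℝ :=
  ∏ j : Fin k, A ω (t j) (t (cyc j))

/-- The triangular scheme `a` is SSB-HKW correlated with respect to the equivalence
relations `R`, with constants `C` and sequences `c`: conditions (A1) and (A2). -/
def IsSSBHKW {Ω : Type*} [MeasurableSpace Ω] (P : Measure Ω)
    (R : (n : ℕ) → (Fin n × Fin n) → (Fin n × Fin n) → Prop)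
    (a : (n : ℕ) → Ω → Matrix (Fin n) (Fin n) ℝ) (C : ℕ → ℝ) (c : ℕ → ℕ → ℝ) : Prop :=
  (∀ n (ω : Ω), (a n ω).IsSymm) ∧
  (∀ (n : ℕ) (p q : Fin n), Measurable fun ω => a n ω p q) ∧
  (∀ s : ℕ, Tendsto (fun n => c s n) atTop (nhds 0)) ∧
  (∀ (n s l : ℕ) (Pa : Fin s → Fin n × Fin n) (Q : Fin l → Fin n × Fin n),
    Function.Injective Pa → Function.Injective Q → (∀ i j, Pa i ≠ Q j) →
    (∀ i j, i ≠ j → ¬ R n (Pa i) (Pa j)) →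
    ∀ δ : Fin l → ℕ, (∀ j, 1 ≤ δ j) →
      |∫ ω, (∏ i, a n ω (Pa i).1 (Pa i).2) * ∏ j, a n ω (Q j).1 (Q j).2 ^ δ j ∂P| ≤
        C (s + ∑ j, δ j) / (n : ℝ) ^ ((s : ℝ) / 2)) ∧
  (∀ (n s : ℕ) (Pa : Fin s → Fin n × Fin n), Function.Injective Pa →
    (∀ i j, i ≠ j → ¬ R n (Pa i) (Pa j)) →
      |(∫ ω, ∏ i, a n ω (Pa i).1 (Pa i).2 ^ 2 ∂P) - 1| ≤ c s n)

/-- `w` is Riemann integrable on `[0,1]`: it is continuous on `[0,1]` outside a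
Lebesgue null set (Lebesgue's criterion; boundedness is assumed separately). -/
def RiemannIntOn01 (w : ℝ → ℝ) : Prop :=
  ∃ s : Set ℝ, MeasureTheory.volume s = 0 ∧
    ∀ x ∈ Set.Icc (0 : ℝ) 1 \ s, ContinuousWithinAt w (Set.Icc (0 : ℝ) 1) x

/-- The weighted matrix `Xₙ = n^{-1/2}[w(|i−j|/n)·aₙ(i,j)]`. -/
noncomputable def wtMat {n : ℕ} (w : ℝ → ℝ) (A : Matrix (Fin n) (Fin n) ℝ) :
    Matrix (Fin n) (Fin n) ℝ :=
  Matrix.of fun i j =>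
    w (|((i : ℕ) : ℝ) - ((j : ℕ) : ℝ)| / (n : ℝ)) * A i j / Real.sqrt n

open Classical in
/-- The set `T_{n,k}(π)` of tuples whose edge-equivalence partition under `∼ₙ` is the
partition given by the setoid `s`. -/
noncomputable def TFin (R : (n : ℕ) → (Fin n × Fin n) → (Fin n × Fin n) → Prop)
    (n k : ℕ) (s : Setoid (Fin k)) : Finset (Fin k → Fin n) :=
  Finset.univ.filter fun t => ∀ i j : Fin k, R n (tedge t i) (tedge t j) ↔ s.r i j

/-- `p` encodes a pair partition of `[k]` (a fixed-point-free involution, blocks `{i, p i}`). -/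
def IsPairPart {k : ℕ} (p : Fin k → Fin k) : Prop :=
  (∀ i, p (p i) = i) ∧ ∀ i, p i ≠ i

/-- The pair partition encoded by `p` is crossing. -/
def Crossing {k : ℕ} (p : Fin k → Fin k) : Prop :=
  ∃ a b c d : Fin k, a < b ∧ b < c ∧ c < d ∧ p a = c ∧ p b = d

open Classical in
/-- The non-crossing pair partitions of `[k]`, encoded as fixed-point-free involutions. -/
noncomputable def NPPFinset (k : ℕ) : Finset (Fin k → Fin k) :=
  Finset.univ.filter fun p => IsPairPart p ∧ ¬ Crossing p

open Classical in
/-- `T_{n,k}(π)` for a pair partition `π` encoded by `p`. -/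
noncomputable def TpairFin (R : (n : ℕ) → (Fin n × Fin n) → (Fin n × Fin n) → Prop)
    (n k : ℕ) (p : Fin k → Fin k) : Finset (Fin k → Fin n) :=
  Finset.univ.filter fun t =>
    ∀ i j : Fin k, R n (tedge t i) (tedge t j) ↔ (i = j ∨ p i = j)

open Classical in
/-- `BT_{n,k}(π)`: the `π`-backtracking tuples in `T_{n,k}(π)` with `k/2 + 1` vertices. -/
noncomputable def BTFin (R : (n : ℕ) → (Fin n × Fin n) → (Fin n × Fin n) → Prop)
    (n k : ℕ) (p : Fin k → Fin k) : Finset (Fin k → Fin n) :=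
  (TpairFin R n k p).filter fun t =>
    (∀ i : Fin k, t i = t (cyc (p i)) ∧ t (cyc i) = t (p i)) ∧
    (Finset.univ.image t).card = k / 2 + 1

/-- The canonical `π`-backtracking tuple (0-based values `0, …, k/2`). -/
noncomputable def canonT0 {k : ℕ} (p : Fin k → Fin k) : ℕ → ℕ
  | 0 => 0
  | (j + 1) =>
    if j = 0 then 1
    else if h : j < k then
      if hp : ((p ⟨j, h⟩ : Fin k) : ℕ) < j then canonT0 p ((p ⟨j, h⟩ : Fin k) : ℕ)
      else 1 + ((Finset.Icc 1 j).filter fun j' =>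
        ∃ h' : j' < k, j' ≤ ((p ⟨j', h'⟩ : Fin k) : ℕ)).card
    else 0

/-!
Choose the entries `t₀, t₁, …` of a tuple in `T_{n,k}(π)` one at a time. There are at most `n`
choices for `t₀`, and for `t_{j+1}` when the edge `e_j` is the first edge of its block; otherwise
`e_j ∼ e_i` for an earlier edge `e_i`, which is already fixed, so by (E2) at most `B` choices are
left for `t_{j+1}`. Among `e₀, …, e_{k-2}` at most `r` edges are first in their block, and at most
`r - 1` if `e_{k-1}` forms a singleton block; a cyclic rotation moves any singleton block there.
-/

open scoped Classical

theorem Finset.card_le_prod_of_card_extensions_le {α : Type*} [DecidableEq α] {k : ℕ}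
    (T : Finset (Fin k → α)) (c : Fin k → ℕ)
    (h : ∀ j, ∀ t ∈ T, #({t' ∈ T | ∀ i < j, t' i = t i}.image (· j)) ≤ c j) :
    #T ≤ ∏ j, c j := by
  induction k with
  | zero => simpa using card_le_one_of_subsingleton T
  | succ k ih =>
    have hinit : #(T.image Fin.init) ≤ ∏ j : Fin k, c j.castSucc := by
      refine ih _ _ fun j u hu => ?_
      obtain ⟨t, ht, rfl⟩ := mem_image.1 hu
      refine (card_le_card ?_).trans (h j.castSucc t ht)
      simp only [subset_iff, mem_image, mem_filter]
      rintro _ ⟨_, ⟨⟨v, hv, rfl⟩, hagree⟩, rfl⟩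
      refine ⟨v, ⟨hv, fun i hi => ?_⟩, rfl⟩
      rw [← Fin.castSucc_castPred i (Fin.ne_last_of_lt hi)]
      exact hagree _ ((Fin.castPred_lt_iff _).2 hi)
    have hfiber : ∀ u ∈ T.image Fin.init, #{v ∈ T | Fin.init v = u} ≤ c (Fin.last k) := by
      intro u hu
      obtain ⟨t, ht, rfl⟩ := mem_image.1 hu
      refine (card_le_card_of_injOn (· (Fin.last k)) ?_ ?_).trans (h _ t ht)
      · intro v hv
        rw [mem_coe, mem_filter] at hv
        refine mem_image.2 ⟨v, mem_filter.2 ⟨hv.1, fun i hi => ?_⟩, rfl⟩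
        rw [← Fin.castSucc_castPred i (Fin.ne_last_of_lt hi)]
        exact congrFun hv.2 _
      · intro v hv w hw hvw
        rw [mem_coe, mem_filter] at hv hw
        rw [← Fin.snoc_init_self v, ← Fin.snoc_init_self w, hv.2, hw.2]
        exact congrArg _ hvw
    calc #T ≤ c (Fin.last k) * #(T.image Fin.init) := card_le_mul_card_image T _ hfiber
      _ ≤ c (Fin.last k) * ∏ j : Fin k, c j.castSucc := Nat.mul_le_mul_left _ hinit
      _ = ∏ j, c j := by rw [Fin.prod_univ_castSucc, mul_comm]

theorem Nat.pow_mul_pow_le_pow_mul_pow {n B a b c d : ℕ} (hB : 1 ≤ B) (hn : B ≤ n)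
    (hac : a ≤ c) (h : a + b ≤ c + d) : n ^ a * B ^ b ≤ n ^ c * B ^ d :=
  calc n ^ a * B ^ b ≤ n ^ a * B ^ (c - a + d) :=
        Nat.mul_le_mul_left _ (Nat.pow_le_pow_right hB (by omega))
    _ = n ^ a * B ^ (c - a) * B ^ d := by rw [pow_add, mul_assoc]
    _ ≤ n ^ a * n ^ (c - a) * B ^ d := by gcongr
    _ = n ^ c * B ^ d := by rw [← pow_add, Nat.add_sub_cancel' hac]

def IsBlockMin {ι : Type*} [LT ι] (s : Setoid ι) (j : ι) : Prop := ∀ i < j, ¬ s.r i j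

theorem card_isBlockMin_le {ι : Type*} [LinearOrder ι] [Fintype ι] (s : Setoid ι) :
    #{j | IsBlockMin s j} ≤ Nat.card (Quotient s) := by
  rw [Nat.card_eq_fintype_card, ← card_univ]
  refine card_le_card_of_injOn (Quotient.mk s) (fun _ _ => mem_univ _) fun a ha b hb hab => ?_
  rw [mem_coe, mem_filter] at ha hb
  have hab : s.r a b := Quotient.exact hab
  rcases lt_trichotomy a b with h | h | h
  · exact absurd hab (hb.2 a h)
  · exact h
  · exact absurd (s.symm hab) (ha.2 b h)

theorem card_isBlockMin_castSucc_add_le {k : ℕ} (s : Setoid (Fin (k + 1))) :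
    #{q : Fin k | IsBlockMin s q.castSucc} + (if IsBlockMin s (Fin.last k) then 1 else 0) ≤
      Nat.card (Quotient s) := by
  simpa only [card_filter, Fin.sum_univ_castSucc] using card_isBlockMin_le s

theorem cyc_castSucc {k : ℕ} (i : Fin k) : cyc i.castSucc = i.succ :=
  Fin.coeSucc_eq_succ

theorem tedge_comp_addRight {n k : ℕ} (t : Fin (k + 1) → Fin n) (d i : Fin (k + 1)) :
    tedge (fun j => t (j + d)) i = tedge t (i + d) := by
  simp only [tedge, cyc, add_right_comm]

section Counting

variable {R : (n : ℕ) → (Fin n × Fin n) → (Fin n × Fin n) → Prop} {B n k : ℕ}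

theorem card_extensions_TFin_le_of_not_isBlockMin (hE2 : CondE2 R B)
    {s : Setoid (Fin (k + 1))} {q : Fin k} (hq : ¬IsBlockMin s q.castSucc)
    (t : Fin (k + 1) → Fin n) :
    #({t' ∈ TFin R n (k + 1) s | ∀ i < q.succ, t' i = t i}.image (· q.succ)) ≤ B := by
  obtain ⟨i, hi, hiq⟩ : ∃ i < q.castSucc, s.r i q.castSucc := by
    simpa [IsBlockMin] using hq
  obtain ⟨i, rfl⟩ := Fin.exists_castSucc_eq.2 (Fin.ne_last_of_lt hi)
  rw [Fin.castSucc_lt_castSucc_iff] at hi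
  have hD := hE2 n (t i.castSucc) (t i.succ) (t q.castSucc)
  rw [Nat.card_eq_fintype_card, Fintype.card_subtype] at hD
  refine (card_le_card ?_).trans hD
  simp only [subset_iff, mem_image, mem_filter, mem_univ, true_and]
  rintro _ ⟨t', ⟨ht', hagree⟩, rfl⟩
  have hR := ((mem_filter.1 ht').2 i.castSucc q.castSucc).2 hiq
  rwa [tedge, tedge, cyc_castSucc, cyc_castSucc, hagree _ (Fin.castSucc_lt_succ_iff.2 hi.le),
    hagree _ (Fin.succ_lt_succ_iff.2 hi), hagree _ q.castSucc_lt_succ] at hR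

theorem card_TFin_le (hE2 : CondE2 R B) (s : Setoid (Fin (k + 1))) :
    #(TFin R n (k + 1) s) ≤ n ^ (1 + #{q : Fin k | IsBlockMin s q.castSucc}) *
      B ^ #{q : Fin k | ¬IsBlockMin s q.castSucc} :=
  calc #(TFin R n (k + 1) s)
      ≤ ∏ j, (Fin.cons n fun q => if IsBlockMin s q.castSucc then n else B :
          Fin (k + 1) → ℕ) j := by
        refine card_le_prod_of_card_extensions_le _ _ fun j t _ => ?_
        cases j using Fin.cases with
        | zero => exact (card_le_univ _).trans_eq (Fintype.card_fin n)
        | succ q =>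
          rw [Fin.cons_succ]
          split_ifs with hq
          · exact (card_le_univ _).trans_eq (Fintype.card_fin n)
          · exact card_extensions_TFin_le_of_not_isBlockMin hE2 hq t
    _ = _ := by
        simp only [Fin.prod_univ_succ, Fin.cons_zero, Fin.cons_succ]
        rw [prod_ite, prod_const, prod_const, pow_add, pow_one, mul_assoc]

theorem card_TFin_le_pow (hB : 1 ≤ B) (hn : B ≤ n) (hE2 : CondE2 R B)
    (s : Setoid (Fin (k + 1))) :
    #(TFin R n (k + 1) s) ≤
      n ^ (Nat.card (Quotient s) + 1) * B ^ (k + 1 - Nat.card (Quotient s) - 1) := by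
  have hmin := (Nat.le_add_right _ _).trans (card_isBlockMin_castSucc_add_le s)
  have hsplit := card_filter_add_card_filter_not (s := univ) fun q : Fin k =>
    IsBlockMin s q.castSucc
  rw [card_univ, Fintype.card_fin] at hsplit
  exact (card_TFin_le hE2 s).trans (Nat.pow_mul_pow_le_pow_mul_pow hB hn (by omega) (by omega))

theorem card_TFin_le_pow_of_isBlockMin_last (hB : 1 ≤ B) (hn : B ≤ n) (hE2 : CondE2 R B)
    {s : Setoid (Fin (k + 1))} (hs : IsBlockMin s (Fin.last k)) :
    #(TFin R n (k + 1) s) ≤ n ^ Nat.card (Quotient s) * B ^ (k + 1 - Nat.card (Quotient s)) := by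
  have hmin := card_isBlockMin_castSucc_add_le s
  rw [if_pos hs] at hmin
  have hsplit := card_filter_add_card_filter_not (s := univ) fun q : Fin k =>
    IsBlockMin s q.castSucc
  rw [card_univ, Fintype.card_fin] at hsplit
  have hr : Nat.card (Quotient s) ≤ k + 1 := by
    simpa using Nat.card_le_card_of_surjective _ (Quotient.mk_surjective (s := s))
  exact (card_TFin_le hE2 s).trans (Nat.pow_mul_pow_le_pow_mul_pow hB hn (by omega) (by omega))

theorem card_TFin_comap_addRight (s : Setoid (Fin (k + 1))) (d : Fin (k + 1)) :
    #(TFin R n (k + 1) (s.comap (· + d))) = #(TFin R n (k + 1) s) := by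
  have hmem : ∀ t : Fin (k + 1) → Fin n,
      (fun j => t (j + d)) ∈ TFin R n (k + 1) (s.comap (· + d)) ↔ t ∈ TFin R n (k + 1) s := by
    intro t
    simp only [TFin, mem_filter, mem_univ, true_and, tedge_comp_addRight, Setoid.comap_rel]
    exact ⟨fun h i j => by simpa using h (i - d) (j - d), fun h i j => h _ _⟩
  refine card_nbij' (fun t j => t (j - d)) (fun t j => t (j + d)) (fun t ht => ?_)
    (fun t ht => (hmem t).2 ht) (fun t _ => by simp) (fun t _ => by simp)
  refine (hmem _).1 ?_
  simpa using ht

end Counting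

theorem Nat.card_quotient_comap_addRight {k : ℕ} (s : Setoid (Fin (k + 1))) (d : Fin (k + 1)) :
    Nat.card (Quotient (s.comap (· + d))) = Nat.card (Quotient s) :=
  Nat.card_congr (Quotient.congr (Equiv.addRight d) fun _ _ => Iff.rfl)

theorem stmt10_general (R : (n : ℕ) → (Fin n × Fin n) → (Fin n × Fin n) → Prop)
    (B : ℕ) (hB : 1 ≤ B) (hE2 : CondE2 R B)
    (k : ℕ) (hk : 1 ≤ k) (s : Setoid (Fin k)) (r : ℕ) (hr : r = Nat.card (Quotient s))
    (n : ℕ) (hn : B ≤ n) :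
    (TFin R n k s).card ≤ n ^ (r + 1) * B ^ (k - r - 1) ∧
    ((∃ i : Fin k, ∀ j : Fin k, s.r i j → j = i) →
      (TFin R n k s).card ≤ n ^ r * B ^ (k - r)) := by
  obtain ⟨k, rfl⟩ : ∃ k', k = k' + 1 := ⟨k - 1, by omega⟩
  subst hr
  refine ⟨card_TFin_le_pow hB hn hE2 s, fun ⟨i₀, hi₀⟩ => ?_⟩
  have hlast : IsBlockMin (s.comap (· + (i₀ - Fin.last k))) (Fin.last k) := by
    intro i hi hrel
    rw [Setoid.comap_rel, add_sub_cancel] at hrel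
    have hi₀' := congrArg (· - (i₀ - Fin.last k)) (hi₀ _ (s.symm hrel))
    exact hi.ne (by simpa using hi₀')
  rw [← card_TFin_comap_addRight s (i₀ - Fin.last k),
    ← Nat.card_quotient_comap_addRight s (i₀ - Fin.last k)]
  exact card_TFin_le_pow_of_isBlockMin_last hB hn hE2 hlast

/-- Counting bound for `T_{n,k}(π)` (Lemma 3.2): if `π` has `r` blocks and `n ≥ B`, then
`#T_{n,k}(π) ≤ n^{r+1}·B^{k−r−1}`, and `#T_{n,k}(π) ≤ n^r·B^{k−r}` if `π` has a singleton. -/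
theorem stmt10 (R : (n : ℕ) → (Fin n × Fin n) → (Fin n × Fin n) → Prop)
    (hR : EquivFamily R) (B : ℕ) (hB : 1 ≤ B) (hE2 : CondE2 R B)
    (k : ℕ) (hk : 1 ≤ k) (s : Setoid (Fin k)) (r : ℕ) (hr : r = Nat.card (Quotient s))
    (n : ℕ) (hn : B ≤ n) :
    (TFin R n k s).card ≤ n ^ (r + 1) * B ^ (k - r - 1) ∧
    ((∃ i : Fin k, ∀ j : Fin k, s.r i j → j = i) →
      (TFin R n k s).card ≤ n ^ r * B ^ (k - r)) :=
  stmt10_general R B hB hE2 k hk s r hr n hn
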